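/- arXiv:0811.2781 — 6 statements merged into one kernel-verified Lean document; each statement's English description precedes it below -/
import Mathlib

section
/- Fix k ≥ 0 and define ϑ_r(x;y) = ∑_{i≥0} q_{r-i}(x) e_i(y) where y = (y_1,...,y_k). Then ∑_{i+j=r} (-1)^i ϑ_i ϑ_j equals 0 if r is odd, and equals (-1)^{r/2} e_{r/2}(y_1^2,...,y_k^2) if r is even. -/
/-!
Put `E(t) = ∏ⱼ (1 + yⱼ t)`. Then `ϑ_r` is the `t^r`-coefficient of `Θ = E · Q`, and the alternating
sum `∑ (-1)^i ϑ_i ϑ_{r-i}` is the `t^r`-coefficient of `Θ(-t) Θ(t)`. Since `A = ∏ᵢ (1 - xᵢ t)` is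
invertible and `Q(t) A(t) = A(-t)`, we get `Q(t) Q(-t) = 1`, hence
`Θ(-t) Θ(t) = E(t) E(-t) = ∏ⱼ (1 - yⱼ² t²)`: a series in `t²` whose `t^{2m}`-coefficient is
`e_m(-y²) = (-1)^m e_m(y²)`.
-/

/-- The value of the elementary symmetric polynomial `e_i(y)` in `k` variables
(it vanishes for `i > k`). -/
def esymmVal {R : Type*} [CommRing R] {k : ℕ} (y : Fin k → R) (i : ℕ) : R :=
  ∑ s ∈ Finset.powersetCard i (Finset.univ : Finset (Fin k)), ∏ j ∈ s, y j

/-- `ϑ_r(x;y) = ∑_i q_{r-i}(x) e_i(y)`, where `q_j` is the `j`-th coefficient of `Q`. -/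
noncomputable def thetaNat {R : Type*} [CommRing R] {k : ℕ}
    (Q : PowerSeries R) (y : Fin k → R) (r : ℕ) : R :=
  ∑ i ∈ Finset.range (r + 1), PowerSeries.coeff (R := R) (r - i) Q * esymmVal y i

open Finset PowerSeries

section

variable {R : Type*} [CommRing R] {k : ℕ}

lemma esymmVal_const_mul (c : R) (a : Fin k → R) (m : ℕ) :
    esymmVal (fun j => c * a j) m = c ^ m * esymmVal a m := by
  rw [esymmVal, esymmVal, mul_sum]
  refine sum_congr rfl fun t ht => ?_
  rw [prod_mul_distrib, prod_const, (mem_powersetCard.mp ht).2]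

lemma coeff_prod_one_add_C_mul_X (a : Fin k → R) (r : ℕ) :
    coeff r (∏ j, (1 + C (a j) * X)) = esymmVal a r := by
  simp_rw [prod_one_add, prod_mul_distrib, prod_const, ← map_prod, map_sum, coeff_C_mul_X_pow,
    esymmVal, powersetCard_eq_filter, sum_filter, eq_comm]

lemma thetaNat_eq_coeff (Q : R⟦X⟧) (y : Fin k → R) (r : ℕ) :
    thetaNat Q y r = coeff r ((∏ j, (1 + C (y j) * X)) * Q) := by
  rw [coeff_mul, Nat.sum_antidiagonal_eq_sum_range_succ_mk, thetaNat]
  exact sum_congr rfl fun i _ => by rw [coeff_prod_one_add_C_mul_X, mul_comm]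

lemma coeff_rescale_neg_one_mul (f g : R⟦X⟧) (r : ℕ) :
    coeff r (rescale (-1) f * g) =
      ∑ i ∈ range (r + 1), (-1) ^ i * coeff i f * coeff (r - i) g := by
  rw [coeff_mul, Nat.sum_antidiagonal_eq_sum_range_succ_mk]
  exact sum_congr rfl fun i _ => by rw [coeff_rescale]

lemma rescale_neg_one_involutive : Function.Involutive (rescale (-1 : R)) := fun f => by
  rw [rescale_rescale, neg_one_mul, neg_neg, rescale_one, RingHom.id_apply]

lemma rescale_neg_one_one_add_C_mul_X (a : R) :
    rescale (-1) (1 + C a * X) = 1 - C a * X := by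
  ext (_ | _ | n) <;> simp [coeff_rescale, coeff_one]

lemma rescale_neg_one_one_sub_C_mul_X (a : R) :
    rescale (-1) (1 - C a * X) = 1 + C a * X := by
  ext (_ | _ | n) <;> simp [coeff_rescale, coeff_one]

lemma mul_rescale_neg_one_self_eq_one {Q A : R⟦X⟧} (hA : IsUnit (constantCoeff A))
    (hQ : Q * A = rescale (-1) A) : Q * rescale (-1) Q = 1 := by
  have hQ' : rescale (-1) Q * rescale (-1) A = A := by
    rw [← map_mul, hQ, rescale_neg_one_involutive]
  have hAA : IsUnit (A * rescale (-1) A) := by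
    rw [isUnit_iff_constantCoeff, map_mul, ← coeff_zero_eq_constantCoeff_apply (rescale _ A),
      coeff_rescale, pow_zero, one_mul, coeff_zero_eq_constantCoeff_apply]
    exact hA.mul hA
  refine hAA.mul_right_cancel ?_
  calc Q * rescale (-1) Q * (A * rescale (-1) A)
      = (Q * A) * (rescale (-1) Q * rescale (-1) A) := by ring
    _ = 1 * (A * rescale (-1) A) := by rw [hQ, hQ']; ring

lemma prod_one_add_C_mul_X_mul_rescale_neg_one (a : Fin k → R) :
    (∏ j, (1 + C (a j) * X)) * rescale (-1) (∏ j, (1 + C (a j) * X)) =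
      expand 2 two_ne_zero (∏ j, (1 + C (-a j ^ 2) * X)) := by
  rw [map_prod, map_prod, ← prod_mul_distrib]
  refine prod_congr rfl fun j _ => ?_
  rw [rescale_neg_one_one_add_C_mul_X, map_add, map_one, map_mul, expand_C, expand_X, map_neg,
    map_pow]
  ring

lemma sum_neg_one_pow_mul_thetaNat_mul_thetaNat {Q : R⟦X⟧} (hQ : Q * rescale (-1) Q = 1)
    (y : Fin k → R) (r : ℕ) :
    ∑ i ∈ range (r + 1), (-1 : R) ^ i * thetaNat Q y i * thetaNat Q y (r - i) =
      coeff r (expand 2 two_ne_zero (∏ j, (1 + C (-y j ^ 2) * X))) := by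
  set E : R⟦X⟧ := ∏ j, (1 + C (y j) * X)
  have hΘ : rescale (-1) (E * Q) * (E * Q) =
      expand 2 two_ne_zero (∏ j, (1 + C (-y j ^ 2) * X)) :=
    calc rescale (-1) (E * Q) * (E * Q) = E * rescale (-1) E * (Q * rescale (-1) Q) := by
          rw [map_mul]; ring
      _ = _ := by rw [hQ, mul_one, prod_one_add_C_mul_X_mul_rescale_neg_one]
  rw [← hΘ, coeff_rescale_neg_one_mul]
  simp only [thetaNat_eq_coeff, E]

end

/-- `∑_{i+j=r} (-1)^i ϑ_i ϑ_j` is `0` for odd `r` and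
`(-1)^{r/2} e_{r/2}(y²)` for even `r`. -/
theorem stmt_1 {R : Type*} [CommRing R] (n k : ℕ) (x : Fin n → R) (y : Fin k → R)
    (Q : PowerSeries R)
    (hQ : Q * ∏ i : Fin n, (1 - PowerSeries.C (R := R) (x i) * PowerSeries.X) =
          ∏ i : Fin n, (1 + PowerSeries.C (R := R) (x i) * PowerSeries.X)) :
    (∀ r : ℕ, Odd r →
        ∑ i ∈ Finset.range (r + 1), (-1 : R) ^ i * thetaNat Q y i * thetaNat Q y (r - i) = 0) ∧
    (∀ m : ℕ,
        ∑ i ∈ Finset.range (2 * m + 1), (-1 : R) ^ i * thetaNat Q y i * thetaNat Q y (2 * m - i)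
          = (-1 : R) ^ m * esymmVal (fun j => y j ^ 2) m) := by
  have hQQ : Q * rescale (-1) Q = 1 := by
    refine mul_rescale_neg_one_self_eq_one (A := ∏ i, (1 - C (x i) * X)) (by simp [map_prod]) ?_
    rw [hQ, map_prod]
    exact prod_congr rfl fun i _ => (rescale_neg_one_one_sub_C_mul_X (x i)).symm
  refine ⟨fun r hr => ?_, fun m => ?_⟩
  · rw [sum_neg_one_pow_mul_thetaNat_mul_thetaNat hQQ]
    exact coeff_expand_of_not_dvd _ _ _ (Nat.not_even_iff_odd.mpr hr ∘ even_iff_two_dvd.mpr)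
  · rw [sum_neg_one_pow_mul_thetaNat_mul_thetaNat hQQ, coeff_expand_mul,
      coeff_prod_one_add_C_mul_X]
    simpa using esymmVal_const_mul (-1) (fun j => y j ^ 2) m
end

section
/- For each d ∈ ℕ and k ≥ 0, the number of k-odd partitions of d equals the number of k-strict partitions of d. -/
open Multiset

namespace Stmt5

def OddP (k d : ℕ) (p : Nat.Partition d) : Prop := ∀ a ∈ p.parts, 2 * k < a → Odd a
def StrP (k d : ℕ) (p : Nat.Partition d) : Prop := ∀ a ∈ p.parts, k < a → p.parts.count a ≤ 1

noncomputable def o (k d : ℕ) : ℕ := Nat.card {p : Nat.Partition d // OddP k d p}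
noncomputable def s (k d : ℕ) : ℕ := Nat.card {p : Nat.Partition d // StrP k d p}

lemma part_le (d : ℕ) (p : Nat.Partition d) {a : ℕ} (ha : a ∈ p.parts) : a ≤ d := by
  have := Multiset.single_le_sum (fun x _ => Nat.zero_le x) a ha
  rwa [p.parts_sum] at this

lemma two_part_le (d : ℕ) (p : Nat.Partition d) {a : ℕ} (ha : 2 ≤ p.parts.count a) :
    2 * a ≤ d := by
  have h : Multiset.replicate 2 a ≤ p.parts := le_count_iff_replicate_le.mp ha
  obtain ⟨u, hu⟩ := Multiset.le_iff_exists_add.mp h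
  have hsum := p.parts_sum
  rw [hu, Multiset.sum_add, Multiset.sum_replicate, smul_eq_mul] at hsum
  omega

lemma vac_odd {k d : ℕ} (h : d ≤ 2 * k + 1) (p : Nat.Partition d) : OddP k d p := by
  intro a ha hlt
  have := part_le d p ha
  have : a = 2 * k + 1 := by omega
  exact ⟨k, by omega⟩

lemma vac_str {k d : ℕ} (h : d ≤ 2 * k + 1) (p : Nat.Partition d) : StrP k d p := by
  intro a ha hlt
  by_contra hc
  have := two_part_le d p (a := a) (by omega)
  omega


lemma card_split {α : Type*} [Finite α] (P Q : α → Prop) :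
    Nat.card {x // P x} = Nat.card {x // P x ∧ Q x} + Nat.card {x // P x ∧ ¬ Q x} := by
  classical
  rw [← Nat.card_sum]
  refine Nat.card_congr ?_
  exact ((Equiv.sumCompl (fun y : {x // P x} => Q y.1)).symm.trans
    (Equiv.sumCongr (Equiv.subtypeSubtypeEquivSubtypeInter P Q)
      (Equiv.subtypeSubtypeEquivSubtypeInter P (fun x => ¬ Q x))))

lemma odd_iff {k d : ℕ} (p : Nat.Partition d) :
    (OddP (k + 1) d p ∧ ¬ (2 * k + 2) ∈ p.parts) ↔ OddP k d p := by
  constructor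
  · rintro ⟨h1, h2⟩ a ha hlt
    rcases Nat.lt_or_ge a (2 * k + 2) with h | h
    · exact ⟨k, by omega⟩
    rcases Nat.eq_or_lt_of_le h with h | h
    · exact absurd (h ▸ ha) h2
    · exact h1 a ha (by omega)
  · intro h
    refine ⟨fun a ha hlt => h a ha (by omega), fun hm => ?_⟩
    have := h _ hm (by omega)
    rw [Nat.odd_iff] at this
    omega

lemma str_iff {k d : ℕ} (p : Nat.Partition d) :
    (StrP (k + 1) d p ∧ ¬ 2 ≤ p.parts.count (k + 1)) ↔ StrP k d p := by
  constructor
  · rintro ⟨h1, h2⟩ a ha hlt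
    rcases Nat.eq_or_lt_of_le hlt with h | h
    · rw [Nat.succ_eq_add_one] at h; rw [← h]; omega
    · exact h1 a ha (by omega)
  · intro h
    refine ⟨fun a ha hlt => h a ha (by omega), fun hc => ?_⟩
    have hm : (k + 1) ∈ p.parts := Multiset.count_pos.mp (by omega)
    have := h _ hm (by omega)
    omega


def oddEquiv {k d : ℕ} (hk : 2 * k + 2 ≤ d) :
    {p : Nat.Partition d // OddP (k+1) d p ∧ (2 * k + 2) ∈ p.parts} ≃
      {q : Nat.Partition (d - (2 * k + 2)) // OddP (k+1) (d - (2 * k + 2)) q} where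
  toFun p := ⟨⟨p.1.parts.erase (2*k+2),
      fun ha => p.1.parts_pos (Multiset.mem_of_mem_erase ha),
      by
        have h := Multiset.cons_erase p.2.2
        have h2 := p.1.parts_sum
        rw [← h, Multiset.sum_cons] at h2
        omega⟩,
      fun a ha hlt => p.2.1 a (Multiset.mem_of_mem_erase ha) hlt⟩
  invFun q := ⟨⟨(2*k+2) ::ₘ q.1.parts,
      by
        intro a ha
        rcases Multiset.mem_cons.mp ha with rfl | h
        · omega
        · exact q.1.parts_pos h,
      by rw [Multiset.sum_cons, q.1.parts_sum]; omega⟩,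
      ⟨by
        intro a ha hlt
        rcases Multiset.mem_cons.mp ha with rfl | h
        · exact absurd hlt (by omega)
        · exact q.2 a h hlt,
       Multiset.mem_cons_self _ _⟩⟩
  left_inv p := by
    apply Subtype.ext; apply Nat.Partition.ext
    exact Multiset.cons_erase p.2.2
  right_inv q := by
    apply Subtype.ext; apply Nat.Partition.ext
    exact Multiset.erase_cons_head _ _

def strEquiv {k d : ℕ} (hk : 2 * k + 2 ≤ d) :
    {p : Nat.Partition d // StrP (k+1) d p ∧ 2 ≤ p.parts.count (k+1)} ≃
      {q : Nat.Partition (d - (2 * k + 2)) // StrP (k+1) (d - (2 * k + 2)) q} where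
  toFun p := by
    have m1 : (k+1) ∈ p.1.parts := Multiset.count_pos.mp (by have := p.2.2; omega)
    have m2 : (k+1) ∈ p.1.parts.erase (k+1) := Multiset.count_pos.mp
      (by rw [Multiset.count_erase_self]; have := p.2.2; omega)
    refine ⟨⟨(p.1.parts.erase (k+1)).erase (k+1),
      fun ha => p.1.parts_pos (Multiset.mem_of_mem_erase (Multiset.mem_of_mem_erase ha)), ?_⟩,
      ?_⟩
    · have h1 := Multiset.cons_erase m1
      have h2 := Multiset.cons_erase m2
      have h3 := p.1.parts_sum
      rw [← h1, ← h2, Multiset.sum_cons, Multiset.sum_cons] at h3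
      omega
    · intro a ha hlt
      have hle : (p.1.parts.erase (k+1)).erase (k+1) ≤ p.1.parts :=
        le_trans (Multiset.erase_le _ _) (Multiset.erase_le _ _)
      calc Multiset.count a ((p.1.parts.erase (k+1)).erase (k+1))
          ≤ Multiset.count a p.1.parts := Multiset.count_le_of_le a hle
        _ ≤ 1 := p.2.1 a (Multiset.mem_of_mem_erase (Multiset.mem_of_mem_erase ha)) hlt
  invFun q := by
    refine ⟨⟨(k+1) ::ₘ (k+1) ::ₘ q.1.parts, ?_, ?_⟩, ?_, ?_⟩
    · intro a ha
      rcases Multiset.mem_cons.mp ha with rfl | ha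
      · omega
      rcases Multiset.mem_cons.mp ha with rfl | ha
      · omega
      · exact q.1.parts_pos ha
    · rw [Multiset.sum_cons, Multiset.sum_cons, q.1.parts_sum]; omega
    · intro a ha hlt
      have hne : a ≠ k + 1 := by omega
      rw [Multiset.count_cons_of_ne hne, Multiset.count_cons_of_ne hne]
      rcases Multiset.mem_cons.mp ha with rfl | ha
      · exact absurd rfl hne
      rcases Multiset.mem_cons.mp ha with rfl | ha
      · exact absurd rfl hne
      · exact q.2 a ha hlt
    · rw [Multiset.count_cons_self, Multiset.count_cons_self]; omega
  left_inv p := by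
    have m1 : (k+1) ∈ p.1.parts := Multiset.count_pos.mp (by have := p.2.2; omega)
    have m2 : (k+1) ∈ p.1.parts.erase (k+1) := Multiset.count_pos.mp
      (by rw [Multiset.count_erase_self]; have := p.2.2; omega)
    apply Subtype.ext; apply Nat.Partition.ext
    show (k+1) ::ₘ (k+1) ::ₘ (p.1.parts.erase (k+1)).erase (k+1) = p.1.parts
    rw [Multiset.cons_erase m2, Multiset.cons_erase m1]
  right_inv q := by
    apply Subtype.ext; apply Nat.Partition.ext
    show (((k+1) ::ₘ (k+1) ::ₘ q.1.parts).erase (k+1)).erase (k+1) = q.1.parts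
    rw [Multiset.erase_cons_head, Multiset.erase_cons_head]

lemma rec_o {k d : ℕ} (hk : 2 * k + 2 ≤ d) :
    o (k+1) d = o k d + o (k+1) (d - (2*k+2)) := by
  rw [o, card_split (OddP (k+1) d) (fun p => (2*k+2) ∈ p.parts), Nat.add_comm]
  congr 1
  · exact Nat.card_congr (Equiv.subtypeEquivRight (fun p => odd_iff p))
  · exact Nat.card_congr (oddEquiv hk)

lemma rec_s {k d : ℕ} (hk : 2 * k + 2 ≤ d) :
    s (k+1) d = s k d + s (k+1) (d - (2*k+2)) := by
  rw [s, card_split (StrP (k+1) d) (fun p => 2 ≤ p.parts.count (k+1)), Nat.add_comm]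
  congr 1
  · exact Nat.card_congr (Equiv.subtypeEquivRight (fun p => str_iff p))
  · exact Nat.card_congr (strEquiv hk)

lemma main (d : ℕ) : ∀ k, o k d = s k d := by
  induction d using Nat.strong_induction_on with
  | _ d IH =>
    have key : ∀ j k, d ≤ 2 * (k + j) + 1 → o k d = s k d := by
      intro j
      induction j with
      | zero =>
        intro k hk
        rw [o, s, Nat.card_congr (Equiv.subtypeUnivEquiv (vac_odd (by omega))),
          Nat.card_congr (Equiv.subtypeUnivEquiv (vac_str (by omega)))]
      | succ j IHj =>
        intro k hk
        rcases Nat.lt_or_ge d (2*k+2) with h | h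
        · rw [o, s, Nat.card_congr (Equiv.subtypeUnivEquiv (vac_odd (by omega))),
            Nat.card_congr (Equiv.subtypeUnivEquiv (vac_str (by omega)))]
        · have h1 := rec_o (k := k) (d := d) h
          have h2 := rec_s (k := k) (d := d) h
          have h3 : o (k+1) d = s (k+1) d := IHj (k+1) (by omega)
          have h4 : o (k+1) (d - (2*k+2)) = s (k+1) (d - (2*k+2)) :=
            IH _ (by omega) (k+1)
          omega
    intro k
    exact key d k (by omega)

end Stmt5

/-- for each `d` and `k`, the number of `k`-odd partitions of `d`
(all parts greater than `2k` are odd) equals the number of `k`-strict partitions of `d`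
(no part greater than `k` is repeated). -/
theorem stmt_5 (d k : ℕ) :
    Nat.card {p : Nat.Partition d // ∀ a ∈ p.parts, 2 * k < a → Odd a}
      = Nat.card {p : Nat.Partition d // ∀ a ∈ p.parts, k < a → p.parts.count a ≤ 1} := by
  exact Stmt5.main d k
end

section
/- Let λ be a k-strict partition and μ a k-strict partition such that λ → μ (the Pieri relation). Then for any t ≥ ℓ(λ), the set C_t(λ) = {(i,j) : 1 ≤ i ≤ j ≤ t, λ_i + λ_j > 2k + j - i} is contained in C_{t+1}(μ), which in turn is contained in C_t(λ) ∪ ∂C_t(λ). -/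
/-- `b` is a box of the Young diagram of `ν` (rows and columns indexed from `1`). -/
def IsBoxOf (ν : ℕ → ℕ) (b : ℕ × ℕ) : Prop := 1 ≤ b.1 ∧ 1 ≤ b.2 ∧ b.2 ≤ ν b.1

/-- `b` is a box of `μ ∖ λ`. -/
def SkewBox (lam mu : ℕ → ℕ) (b : ℕ × ℕ) : Prop := IsBoxOf mu b ∧ ¬ IsBoxOf lam b

/-- The boxes `[r,c]` and `[r',c']` are `k`-related: `|c-k-1| + r = |c'-k-1| + r'`. -/
def KRel (k : ℕ) (b b' : ℕ × ℕ) : Prop :=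
  |(b.2 : ℤ) - k - 1| + b.1 = |(b'.2 : ℤ) - k - 1| + b'.1

/-- The number of boxes in column `c` of `ν` (rows cut off at the bound `B`). -/
def colLen (ν : ℕ → ℕ) (B c : ℕ) : ℕ := ((Finset.Icc 1 B).filter fun i => c ≤ ν i).card

/-- The Pieri relation `λ → μ` of Buch–Kresch–Tamvakis for `k`-strict partitions:
`λ_j − 1 ≤ μ_j ≤ λ_{j−1}`, `λ_j ≤ μ_j` when `λ_j > k`, together with the
`k`-relatedness conditions (1) and (2). -/
def PieriRel (k B : ℕ) (lam mu : ℕ → ℕ) : Prop :=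
  (∀ j, 1 ≤ j → lam j ≤ mu j + 1) ∧
  (∀ j, 2 ≤ j → mu j ≤ lam (j - 1)) ∧
  (∀ j, 1 ≤ j → k < lam j → lam j ≤ mu j) ∧
  -- condition (1): if one of the first `k` columns of `μ` has the same number of boxes as
  -- the same column of `λ`, then the bottom box of this column is `k`-related to at most
  -- one box of `μ ∖ λ`.
  (∀ c, 1 ≤ c → c ≤ k → colLen mu B c = colLen lam B c → 1 ≤ colLen lam B c →
    ∀ b b' : ℕ × ℕ, SkewBox lam mu b → KRel k (colLen lam B c, c) b →
      SkewBox lam mu b' → KRel k (colLen lam B c, c) b' → b = b') ∧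
  -- condition (2): if a column of `μ` has fewer boxes than the same column of `λ`, then
  -- the removed boxes and the bottom box of `μ` in this column must each be `k`-related to
  -- exactly one box of `μ ∖ λ`, and these boxes of `μ ∖ λ` must all lie in the same row.
  (∀ c, 1 ≤ c → colLen mu B c < colLen lam B c →
    ∃ r0 : ℕ,
      (∀ i, colLen mu B c < i → i ≤ colLen lam B c →
        (∃! b : ℕ × ℕ, SkewBox lam mu b ∧ KRel k (i, c) b) ∧
        (∀ b : ℕ × ℕ, SkewBox lam mu b → KRel k (i, c) b → b.1 = r0)) ∧
      (1 ≤ colLen mu B c →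
        (∃! b : ℕ × ℕ, SkewBox lam mu b ∧ KRel k (colLen mu B c, c) b) ∧
        (∀ b : ℕ × ℕ, SkewBox lam mu b → KRel k (colLen mu B c, c) b → b.1 = r0)))

/-- `C_t(λ) = {(i,j) : 1 ≤ i ≤ j ≤ t and λ_i + λ_j > 2k + j − i}`. -/
def Cset (k : ℕ) (lam : ℕ → ℕ) (t : ℕ) : Set (ℕ × ℕ) :=
  {p | 1 ≤ p.1 ∧ p.1 ≤ p.2 ∧ p.2 ≤ t ∧ 2 * k + p.2 < lam p.1 + lam p.2 + p.1}

/-- The outside rim `∂D` of `D ⊆ Δ`: pairs `(i,j) ∈ Δ ∖ D` with `i = 1` or `(i−1,j−1) ∈ D`. -/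
def OutsideRim (D : Set (ℕ × ℕ)) : Set (ℕ × ℕ) :=
  {p | 1 ≤ p.1 ∧ p.1 ≤ p.2 ∧ p ∉ D ∧ (p.1 = 1 ∨ (p.1 - 1, p.2 - 1) ∈ D)}

/-!
The first inclusion is pointwise. For `(i,j) ∈ C_t(λ)` we have `λ_i > k`, hence `μ_i ≥ λ_i`
and `μ_j ≥ λ_j - 1`, so the inequality can only be lost in the tight case `μ_i = λ_i`,
`μ_j = λ_j - 1`, `λ_j ≤ k`, `λ_i + λ_j + i = 2k + 1 + j`. Then the box `(j, c)`, `c = λ_j`, is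
removed from its column, and condition (2) gives a unique box `(r, c')` of `μ ∖ λ` that is
`k`-related to it; necessarily `c' > k + 1`, and tightness becomes `r + c' = λ_i + i + 1`.
If `r > i`, the `k`-strictness of `λ` and `μ` makes `(r - 1, c' + 1)` a second such box;
`r = i` contradicts `μ_i = λ_i`; if `r < i`, then `(r, c')` is the first box of `μ ∖ λ` in
its row, while the box that condition (2) relates to the bottom box of column `c` of `μ`
lies in the same row but on a lower `k`-diagonal, since that bottom box is above `(j, c)`.

The second inclusion is the interlacing `μ_j ≤ λ_{j-1}` applied at `i` and at `j`.
-/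

section Pieri

variable {k B : ℕ} {lam mu : ℕ → ℕ}

def kDiag (k : ℕ) (b : ℕ × ℕ) : ℤ := |(b.2 : ℤ) - k - 1| + b.1

lemma kRel_iff {b b' : ℕ × ℕ} : KRel k b b' ↔ kDiag k b = kDiag k b' := Iff.rfl

lemma kDiag_of_le {r c : ℕ} (h : c ≤ k + 1) : kDiag k (r, c) = (k : ℤ) + 1 - c + r := by
  rw [kDiag, abs_of_nonpos (by simp only; omega)]
  ring

lemma kDiag_of_ge {r c : ℕ} (h : k + 1 ≤ c) : kDiag k (r, c) = (c : ℤ) - (k + 1) + r := by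
  rw [kDiag, abs_of_nonneg (by simp only; omega)]
  ring

lemma skewBox_iff {r c : ℕ} : SkewBox lam mu (r, c) ↔ 1 ≤ r ∧ lam r < c ∧ c ≤ mu r := by
  simp only [SkewBox, IsBoxOf]
  omega

lemma le_colLen {ν : ℕ → ℕ} {c s : ℕ} (hν : ∀ i j, 1 ≤ i → i ≤ j → ν j ≤ ν i)
    (hsB : s ≤ B) (hc : c ≤ ν s) : s ≤ colLen ν B c := by
  calc s = (Finset.Icc 1 s).card := by simp
    _ ≤ colLen ν B c := Finset.card_le_card fun x hx => by
      rw [Finset.mem_Icc] at hx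
      rw [Finset.mem_filter, Finset.mem_Icc]
      exact ⟨⟨hx.1, hx.2.trans hsB⟩, hc.trans (hν x s hx.1 hx.2)⟩

lemma le_apply_colLen {ν : ℕ → ℕ} {c : ℕ} (hν : ∀ i j, 1 ≤ i → i ≤ j → ν j ≤ ν i)
    (h : 1 ≤ colLen ν B c) : c ≤ ν (colLen ν B c) := by
  by_contra! hlt
  have hsub : (Finset.Icc 1 B).filter (fun i => c ≤ ν i) ⊆ Finset.Icc 1 (colLen ν B c - 1) := by
    intro x hx
    rw [Finset.mem_filter, Finset.mem_Icc] at hx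
    rw [Finset.mem_Icc]
    refine ⟨hx.1.1, ?_⟩
    by_contra! hx'
    have := hν (colLen ν B c) x h (by omega)
    omega
  have hcard : colLen ν B c ≤ colLen ν B c - 1 + 1 - 1 :=
    (Finset.card_le_card hsub).trans_eq (Nat.card_Icc _ _)
  omega

lemma le_colLen_iff {ν : ℕ → ℕ} {c s : ℕ} (hν : ∀ i j, 1 ≤ i → i ≤ j → ν j ≤ ν i)
    (hs : 1 ≤ s) (hsB : s ≤ B) : s ≤ colLen ν B c ↔ c ≤ ν s :=
  ⟨fun h => (le_apply_colLen hν (hs.trans h)).trans (hν s _ hs h), le_colLen hν hsB⟩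

lemma add_sub_le_of_kStrict {ν : ℕ → ℕ} (hν_anti : ∀ i j, 1 ≤ i → i ≤ j → ν j ≤ ν i)
    (hν_strict : ∀ j, 1 ≤ j → k < ν j → ν (j + 1) < ν j)
    {a b : ℕ} (ha : 1 ≤ a) (hab : a ≤ b) (hb : k < ν b) : ν b + (b - a) ≤ ν a := by
  induction b, hab using Nat.le_induction with
  | base => omega
  | succ n hn ih =>
    have hkn : k < ν n := hb.trans_le (hν_anti n (n + 1) (ha.trans hn) n.le_succ)
    have := ih hkn
    have := hν_strict n (ha.trans hn) hkn
    omega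

lemma lt_col_of_kRel_removed
    (hlam_anti : ∀ i j, 1 ≤ i → i ≤ j → lam j ≤ lam i)
    (hmu_anti : ∀ i j, 1 ≤ i → i ≤ j → mu j ≤ mu i)
    {j r c : ℕ} (hj : 1 ≤ j) (hμj : mu j < lam j) (hjk : lam j ≤ k + 1)
    (hb : SkewBox lam mu (r, c)) (hrel : KRel k (j, lam j) (r, c)) : k + 1 < c := by
  rw [skewBox_iff] at hb
  by_contra! hc
  rw [kRel_iff, kDiag_of_le hjk, kDiag_of_le hc] at hrel
  rcases le_or_gt r j with hrj | hjr
  · have := hlam_anti r j hb.1 hrj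
    omega
  · have := hmu_anti j r hj hjr.le
    omega

lemma skewBox_pred_succ
    (hlam_anti : ∀ i j, 1 ≤ i → i ≤ j → lam j ≤ lam i)
    (hmu_anti : ∀ i j, 1 ≤ i → i ≤ j → mu j ≤ mu i)
    (hlam_strict : ∀ j, 1 ≤ j → k < lam j → lam (j + 1) < lam j)
    (hmu_strict : ∀ j, 1 ≤ j → k < mu j → mu (j + 1) < mu j)
    (hP2 : ∀ j, 2 ≤ j → mu j ≤ lam (j - 1))
    {i r c : ℕ} (hi : 1 ≤ i) (hir : i < r) (hc : k < c) (hsum : r + c = lam i + i + 1)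
    (hcr : c ≤ mu r) : SkewBox lam mu (r - 1, c + 1) := by
  have hmur : mu r ≤ lam (r - 1) := hP2 r (by omega)
  have hdesc := add_sub_le_of_kStrict hlam_anti hlam_strict hi (show i ≤ r - 1 by omega)
    (show k < lam (r - 1) by omega)
  have hmu_pred := hmu_anti (r - 1) r (by omega) (by omega)
  have hmu_lt := hmu_strict (r - 1) (by omega) (by omega)
  rw [Nat.sub_add_cancel (by omega)] at hmu_lt
  rw [skewBox_iff]
  omega

lemma PieriRel.false_of_tight (hP : PieriRel k B lam mu)
    (hlam_anti : ∀ i j, 1 ≤ i → i ≤ j → lam j ≤ lam i)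
    (hmu_anti : ∀ i j, 1 ≤ i → i ≤ j → mu j ≤ mu i)
    (hlam_strict : ∀ j, 1 ≤ j → k < lam j → lam (j + 1) < lam j)
    (hmu_strict : ∀ j, 1 ≤ j → k < mu j → mu (j + 1) < mu j)
    (hlamB : ∀ i, B < i → lam i = 0)
    {i j : ℕ} (hi : 1 ≤ i) (hij : i ≤ j) (hki : k < lam i) (hμi : mu i ≤ lam i)
    (hμj : mu j < lam j) (hjk : lam j ≤ k) (htight : lam i + lam j + i = 2 * k + 1 + j) :
    False := by
  obtain ⟨-, hP2, -, -, hP5⟩ := hP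
  have hj : 1 ≤ j := hi.trans hij
  have hjB : j ≤ B := not_lt.1 fun h => by simp [hlamB j h] at hμj
  have hlj : j ≤ colLen lam B (lam j) := le_colLen hlam_anti hjB le_rfl
  have hmj : colLen mu B (lam j) < j := lt_of_not_ge fun h =>
    (not_le.2 hμj) ((le_colLen_iff hmu_anti hj hjB).1 h)
  obtain ⟨r0, hremoved, hbottom⟩ := hP5 (lam j) (by omega) (hmj.trans_le hlj)
  obtain ⟨⟨⟨r, c⟩, ⟨hbox, hrel⟩, huniq⟩, hrow⟩ := hremoved j hmj hlj
  have hc : k + 1 < c := lt_col_of_kRel_removed hlam_anti hmu_anti hj hμj (by omega) hbox hrel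
  have hdiag := hrel
  rw [kRel_iff, kDiag_of_le (by omega), kDiag_of_ge hc.le] at hdiag
  have hrc := skewBox_iff.1 hbox
  rcases lt_trichotomy r i with hri | rfl | hir
  · -- `(r, c)` is the first box of `μ ∖ λ` in row `r`
    have hdesc := add_sub_le_of_kStrict hlam_anti hlam_strict hrc.1 hri.le hki
    have hm : r ≤ colLen mu B (lam j) := le_colLen hmu_anti (by omega) (by omega)
    obtain ⟨⟨⟨r', c'⟩, ⟨hbot, hbotrel⟩, -⟩, hbotrow⟩ := hbottom (by omega)
    obtain rfl : r' = r := (hbotrow _ hbot hbotrel).trans (hrow _ hbox hrel).symm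
    have hrc' := skewBox_iff.1 hbot
    rw [kRel_iff, kDiag_of_le (by omega), kDiag_of_ge (by omega)] at hbotrel
    omega
  · omega
  · have hb2 := skewBox_pred_succ hlam_anti hmu_anti hlam_strict hmu_strict hP2 hi hir
      (by omega) (by omega) hrc.2.2
    have hrel2 : KRel k (j, lam j) (r - 1, c + 1) := by
      rw [kRel_iff, kDiag_of_le (by omega), kDiag_of_ge (by omega)]
      push_cast [Nat.cast_sub (show 1 ≤ r by omega)]
      omega
    have := huniq _ ⟨hb2, hrel2⟩
    simp only [Prod.mk.injEq] at this
    omega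

lemma PieriRel.Cset_subset (hP : PieriRel k B lam mu)
    (hlam_anti : ∀ i j, 1 ≤ i → i ≤ j → lam j ≤ lam i)
    (hmu_anti : ∀ i j, 1 ≤ i → i ≤ j → mu j ≤ mu i)
    (hlam_strict : ∀ j, 1 ≤ j → k < lam j → lam (j + 1) < lam j)
    (hmu_strict : ∀ j, 1 ≤ j → k < mu j → mu (j + 1) < mu j)
    (hlamB : ∀ i, B < i → lam i = 0) (t : ℕ) :
    Cset k lam t ⊆ Cset k mu t := by
  rintro ⟨i, j⟩ ⟨hi, hij, hjt, hC⟩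
  refine ⟨hi, hij, hjt, ?_⟩
  simp only at hi hij hC ⊢
  have hki : k < lam i := by
    have := hlam_anti i j hi hij
    omega
  have hμi := hP.2.2.1 i hi hki
  have hμj := hP.1 j (hi.trans hij)
  by_contra! hle
  have hjk : lam j ≤ k := by
    by_contra! h
    have := hP.2.2.1 j (hi.trans hij) h
    omega
  exact hP.false_of_tight hlam_anti hmu_anti hlam_strict hmu_strict hlamB hi hij hki
    (by omega) (by omega) hjk (by omega)

lemma Cset_mono {t t' : ℕ} {ν : ℕ → ℕ} (h : t ≤ t') : Cset k ν t ⊆ Cset k ν t' :=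
  fun _ ⟨h₁, h₂, h₃, h₄⟩ => ⟨h₁, h₂, h₃.trans h, h₄⟩

lemma Cset_succ_subset_union_outsideRim {t : ℕ} (h : ∀ j, 2 ≤ j → mu j ≤ lam (j - 1)) :
    Cset k mu (t + 1) ⊆ Cset k lam t ∪ OutsideRim (Cset k lam t) := by
  rintro ⟨i, j⟩ ⟨hi, hij, hjt, hC⟩
  by_cases hin : (i, j) ∈ Cset k lam t
  · exact Or.inl hin
  refine Or.inr ⟨hi, hij, hin, ?_⟩
  simp only at hi hij hjt hC ⊢
  rcases hi.eq_or_lt with h1 | h1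
  · exact Or.inl h1.symm
  · have := h i h1
    have := h j (h1.trans_le hij)
    exact Or.inr ⟨by omega, by omega, by omega, by simp only; omega⟩

end Pieri

theorem stmt_9_general (k B t : ℕ) (lam mu : ℕ → ℕ)
    (hlam_anti : ∀ i j, 1 ≤ i → i ≤ j → lam j ≤ lam i)
    (hmu_anti : ∀ i j, 1 ≤ i → i ≤ j → mu j ≤ mu i)
    (hlam_strict : ∀ j, 1 ≤ j → k < lam j → lam (j + 1) < lam j)
    (hmu_strict : ∀ j, 1 ≤ j → k < mu j → mu (j + 1) < mu j)
    (hlamB : ∀ i, B < i → lam i = 0)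
    (hP : PieriRel k B lam mu) :
    Cset k lam t ⊆ Cset k mu (t + 1) ∧
      Cset k mu (t + 1) ⊆ Cset k lam t ∪ OutsideRim (Cset k lam t) :=
  ⟨(hP.Cset_subset hlam_anti hmu_anti hlam_strict hmu_strict hlamB t).trans
      (Cset_mono t.le_succ),
    Cset_succ_subset_union_outsideRim hP.2.1⟩

/-- if `λ` and `μ` are `k`-strict partitions with `λ → μ`, then for any
`t ≥ ℓ(λ)` we have `C_t(λ) ⊆ C_{t+1}(μ) ⊆ C_t(λ) ∪ ∂C_t(λ)`. -/
theorem stmt_9 (k B t : ℕ) (lam mu : ℕ → ℕ)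
    (hlam_anti : ∀ i j, 1 ≤ i → i ≤ j → lam j ≤ lam i)
    (hmu_anti : ∀ i j, 1 ≤ i → i ≤ j → mu j ≤ mu i)
    (hlam_strict : ∀ j, 1 ≤ j → k < lam j → lam (j + 1) < lam j)
    (hmu_strict : ∀ j, 1 ≤ j → k < mu j → mu (j + 1) < mu j)
    (hlamB : ∀ i, B < i → lam i = 0) (hmuB : ∀ i, B < i → mu i = 0)
    (ht : ∀ i, t < i → lam i = 0)
    (hP : PieriRel k B lam mu) :
    Cset k lam t ⊆ Cset k mu (t + 1) ∧
      Cset k mu (t + 1) ⊆ Cset k lam t ∪ OutsideRim (Cset k lam t) :=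
  stmt_9_general k B t lam mu hlam_anti hmu_anti hlam_strict hmu_strict hlamB hP
end

section
/- Let λ be a k-strict partition with middle row m (the minimal index with λ_m ≤ k). For 2 ≤ h ≤ m, define b_h = r(h + λ_h + 1) and g_h = r(h + λ_{h-1}) where r(y) is the largest integer j ≤ ℓ+1 with λ_{j-1} > 2k + j − y (and λ_0 = ∞). Then λ_{h-1} − λ_h ≥ g_h − b_h + 1. -/
/-- let `λ` be a `k`-strict partition of length `ℓ` with middle row `m`
(the minimal index with `λ_m ≤ k`), and `2 ≤ h ≤ m`.  With `r(y)` the largest integer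
`j ≤ ℓ+1` such that `λ_{j-1} > 2k + j − y` (where `λ_0 = ∞`, so `j = 1` always qualifies),
set `b = r(h + λ_h + 1)` and `g = r(h + λ_{h-1})`.  Then `λ_{h-1} − λ_h ≥ g − b + 1`.
Here `b` and `g` are given as parameters characterized by their defining maximality. -/
theorem stmt_10 (k ℓ m h : ℕ) (lam : ℕ → ℕ) (b g : ℕ)
    (hanti : ∀ i j, 1 ≤ i → i ≤ j → lam j ≤ lam i)
    (hstrict : ∀ j, 1 ≤ j → k < lam j → lam (j + 1) < lam j)
    (hlen : ∀ i, ℓ < i → lam i = 0)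
    (hm0 : 1 ≤ m) (hm1 : lam m ≤ k) (hm2 : ∀ i, 1 ≤ i → i < m → k < lam i)
    (hh : 2 ≤ h) (hhm : h ≤ m)
    -- b = r(h + λ_h + 1):
    (hb1 : 1 ≤ b) (hb2 : b ≤ ℓ + 1)
    (hb3 : b = 1 ∨ (2 * k + b : ℤ) < (lam (b - 1) : ℤ) + ((h : ℤ) + lam h + 1))
    (hb4 : ∀ j : ℕ, 1 ≤ j → j ≤ ℓ + 1 →
      (j = 1 ∨ (2 * k + j : ℤ) < (lam (j - 1) : ℤ) + ((h : ℤ) + lam h + 1)) → j ≤ b)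
    -- g = r(h + λ_{h-1}):
    (hg1 : 1 ≤ g) (hg2 : g ≤ ℓ + 1)
    (hg3 : g = 1 ∨ (2 * k + g : ℤ) < (lam (g - 1) : ℤ) + ((h : ℤ) + lam (h - 1)))
    (hg4 : ∀ j : ℕ, 1 ≤ j → j ≤ ℓ + 1 →
      (j = 1 ∨ (2 * k + j : ℤ) < (lam (j - 1) : ℤ) + ((h : ℤ) + lam (h - 1))) → j ≤ g) :
    (g : ℤ) - b + 1 ≤ (lam (h - 1) : ℤ) - lam h := by
  -- strictness at h-1 gives λ_h < λ_{h-1}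
  have hk1 : k < lam (h - 1) := hm2 (h - 1) (by omega) (by omega)
  have hst : lam ((h - 1) + 1) < lam (h - 1) := hstrict (h - 1) (by omega) hk1
  have hdiff : lam h < lam (h - 1) := by
    have : (h - 1) + 1 = h := by omega
    rwa [this] at hst
  by_cases hgb : g ≤ b
  · have : (g : ℤ) ≤ b := by exact_mod_cast hgb
    have : (lam h : ℤ) + 1 ≤ lam (h - 1) := by exact_mod_cast hdiff
    omega
  · push_neg at hgb
    -- b + 1 fails the b-condition
    have hbfail : ¬ (b + 1 = 1 ∨ (2 * k + (b + 1) : ℤ) <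
        (lam ((b + 1) - 1) : ℤ) + ((h : ℤ) + lam h + 1)) := by
      intro hc
      have := hb4 (b + 1) (by omega) (by omega) hc
      omega
    push_neg at hbfail
    have hb5 : (lam b : ℤ) + (h : ℤ) + lam h ≤ 2 * k + b := by
      have h2 := hbfail.2
      simp only [Nat.add_sub_cancel] at h2
      push_cast at h2 ⊢
      omega
    -- g ≥ 2, so the g-condition is the inequality
    have hg3' : (2 * k + g : ℤ) < (lam (g - 1) : ℤ) + ((h : ℤ) + lam (h - 1)) := by
      rcases hg3 with h1 | h2
      · omega
      · exact h2
    have hmono : lam (g - 1) ≤ lam b := hanti b (g - 1) hb1 (by omega)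
    have : (lam (g - 1) : ℤ) ≤ lam b := by exact_mod_cast hmono
    omega
end

section
/- Let R^D = ∏_{i<j} (1 − R_{ij}) be the full product of raising-operator factors acting on a sequence c_α = c_{α_1}···c_{α_ℓ} of elements of a commutative ring, where R_{ij} increases α_i by 1 and decreases α_j by 1. Then ∏_{i<j}(1 − R_{ij}) c_α = det(c_{α_i + j − i})_{1≤i,j≤ℓ}. -/
/-!
Write `x ^ a` for the Laurent monomial with exponent vector `a : Fin ℓ → ℤ`, so that `R_{ij}`
acts as multiplication by `x_i / x_j`. Multiplying `∏_{i<j} (1 - x_i / x_j)` by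
`x ^ ρ = ∏_{i<j} x_j`, where `ρ = (0, 1, …, ℓ - 1)`, gives the Vandermonde product
`∏_{i<j} (x_j - x_i) = ∑_σ sgn σ x ^ σ`; hence `∏_{i<j} (1 - x_i / x_j) = ∑_σ sgn σ x ^ (σ - ρ)`.
Applying the linear functional `x ^ a ↦ ∏_i c_{α_i + a_i}` to both sides turns the left side
into the raising-operator expansion and the right side into the Leibniz expansion of
`det (c_{α_i + j - i})`.
-/

open Finset AddMonoidAlgebra

namespace RaisingOperator

variable {R : Type*} [CommRing R]

def ascendingPairs (n : ℕ) : Finset (Fin n × Fin n) := univ.filter fun p => p.1 < p.2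

@[simp]
theorem mem_ascendingPairs {n : ℕ} {p : Fin n × Fin n} : p ∈ ascendingPairs n ↔ p.1 < p.2 := by
  simp [ascendingPairs]

def raisingExponent {n : ℕ} (i j : Fin n) : Fin n → ℤ := Pi.single i 1 - Pi.single j 1

theorem sum_raisingExponent_apply {n : ℕ} (T : Finset (Fin n × Fin n)) (k : Fin n) :
    (∑ p ∈ T, raisingExponent p.1 p.2) k =
      #(T.filter fun p => p.1 = k) - #(T.filter fun p => p.2 = k) := by
  simp [raisingExponent, Finset.sum_apply, Pi.single_apply, sum_sub_distrib, eq_comm]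

theorem linearCombination_coeff_sum_single {ι M : Type*} (v : M → R) (s : Finset ι) (a : ι → M)
    (r : ι → R) :
    Finsupp.linearCombination R v (∑ i ∈ s, single (a i) (r i)).coeff = ∑ i ∈ s, r i * v (a i) := by
  simp [coeff_sum, coeff_single]

theorem prod_one_sub_single {ι G : Type*} [DecidableEq ι] [AddCommMonoid G]
    (s : Finset ι) (f : ι → G) :
    ∏ p ∈ s, (1 - single (f p) (1 : R)) = ∑ T ∈ s.powerset, single (∑ p ∈ T, f p) ((-1) ^ #T) := by
  have h (p : ι) : 1 - single (f p) (1 : R) = single (f p) (-1) + 1 := by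
    rw [single_neg]; abel
  simp_rw [h, prod_add, prod_const_one, mul_one, prod_single, prod_const]

theorem sum_ascendingPairs_pi_single_snd (n : ℕ) :
    ∑ p ∈ ascendingPairs n, Pi.single p.2 (1 : ℤ) = fun k : Fin n => ((k : ℕ) : ℤ) := by
  funext k
  rw [Finset.sum_apply, sum_finset_product _ univ Ioi (by simp)]
  simp [Pi.single_apply, filter_gt_eq_Iio]

theorem det_vandermonde_single_pi_single (n : ℕ) :
    (Matrix.vandermonde fun i : Fin n => single (Pi.single i (1 : ℤ)) (1 : R)).det =
      ∑ σ : Equiv.Perm (Fin n), single (fun k => ((σ k : ℕ) : ℤ)) ((σ.sign : ℤ) : R) := by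
  rw [← Matrix.det_transpose, Matrix.det_apply']
  refine sum_congr rfl fun σ _ => ?_
  simp only [Matrix.transpose_apply, Matrix.vandermonde_apply, single_pow, one_pow, prod_single,
    prod_const_one, intCast_def, single_mul_single, zero_add, mul_one]
  congr 1
  funext k
  simp [Finset.sum_apply, Pi.single_apply]

theorem prod_ascendingPairs_one_sub_single (n : ℕ) :
    ∏ p ∈ ascendingPairs n, (1 - single (raisingExponent p.1 p.2) (1 : R)) =
      ∑ σ : Equiv.Perm (Fin n), single (fun k => ((σ k : ℕ) : ℤ) - (k : ℕ)) ((σ.sign : ℤ) : R) := by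
  set ρ : Fin n → ℤ := fun k => (k : ℕ)
  set X : Fin n → R[Fin n → ℤ] := fun i => single (Pi.single i 1) 1
  have hρ : IsUnit (single ρ (1 : R)) :=
    .of_mul_eq_one (single (-ρ) 1) (by rw [single_mul_single, add_neg_cancel, mul_one, one_def])
  -- `x ^ ρ = ∏_{i<j} x_j` turns each factor `1 - x_i / x_j` into `x_j - x_i`.
  have hρ_pairs : single ρ (1 : R) = ∏ p ∈ ascendingPairs n, X p.2 := by
    rw [prod_single, prod_const_one, sum_ascendingPairs_pi_single_snd]
  refine hρ.mul_right_cancel ?_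
  calc _ = ∏ p ∈ ascendingPairs n, (X p.2 - X p.1) := by
        rw [hρ_pairs, ← prod_mul_distrib]
        refine prod_congr rfl fun p _ => ?_
        rw [sub_mul, one_mul, single_mul_single, raisingExponent, sub_add_cancel, one_mul]
    _ = (Matrix.vandermonde X).det := by
        rw [Matrix.det_vandermonde, prod_finset_product _ univ Ioi (by simp)]
    _ = _ := by
        rw [det_vandermonde_single_pi_single, sum_mul]
        refine sum_congr rfl fun σ _ => ?_
        rw [single_mul_single, mul_one]
        congr 1
        funext k
        simp [ρ]

end RaisingOperator

open RaisingOperator in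
theorem stmt_11_general {R : Type*} [CommRing R] (ℓ : ℕ) (c : ℤ → R)
    (α : Fin ℓ → ℤ) :
    ∑ T ∈ ((Finset.univ : Finset (Fin ℓ × Fin ℓ)).filter fun p => p.1 < p.2).powerset,
      (-1 : R) ^ T.card *
        ∏ i : Fin ℓ,
          c (α i + ((T.filter fun p => p.1 = i).card : ℤ)
              - ((T.filter fun p => p.2 = i).card : ℤ))
      = Matrix.det (Matrix.of fun i j : Fin ℓ => c (α i + (j : ℕ) - (i : ℕ))) := by
  set v : (Fin ℓ → ℤ) → R := fun a => ∏ i, c (α i + a i)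
  have key := congrArg (fun x => Finsupp.linearCombination R v x.coeff)
    (prod_ascendingPairs_one_sub_single (R := R) ℓ)
  simp only [prod_one_sub_single, linearCombination_coeff_sum_single] at key
  calc _ = ∑ T ∈ (ascendingPairs ℓ).powerset,
          (-1) ^ #T * v (∑ p ∈ T, raisingExponent p.1 p.2) := by
        simp only [v, ascendingPairs, sum_raisingExponent_apply, add_sub_assoc]
    _ = ∑ σ : Equiv.Perm (Fin ℓ), (σ.sign : ℤ) * v (fun k => ((σ k : ℕ) : ℤ) - (k : ℕ)) := key
    _ = _ := by
        rw [← Matrix.det_transpose, Matrix.det_apply']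
        simp only [v, Matrix.transpose_apply, Matrix.of_apply, add_sub_assoc]

/-- the raising-operator expansion `∏_{i<j} (1 − R_{ij}) c_α` equals the
Jacobi–Trudi determinant `det(c_{α_i + j − i})`.  Expanding the product, the left side is
the signed sum over subsets `T` of the pairs `i < j`, where the pair `(i,j)` raises the
`i`-th index by `1` and lowers the `j`-th index by `1`. -/
theorem stmt_11 {R : Type*} [CommRing R] (ℓ : ℕ) (c : ℤ → R)
    (hc0 : c 0 = 1) (hcneg : ∀ r : ℤ, r < 0 → c r = 0)
    (α : Fin ℓ → ℤ) :
    ∑ T ∈ ((Finset.univ : Finset (Fin ℓ × Fin ℓ)).filter fun p => p.1 < p.2).powerset,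
      (-1 : R) ^ T.card *
        ∏ i : Fin ℓ,
          c (α i + ((T.filter fun p => p.1 = i).card : ℤ)
              - ((T.filter fun p => p.2 = i).card : ℤ))
      = Matrix.det (Matrix.of fun i j : Fin ℓ => c (α i + (j : ℕ) - (i : ℕ))) :=
  stmt_11_general ℓ c α
end

section
/- Fix k ≥ 0 and let S^{(k)}_{λ/μ}(x;y) = det(ϑ_{λ_i − μ_j + j − i}(x;y))_{i,j}. For partitions μ ⊆ λ, S^{(k)}_{λ/μ}(x;y) = ∑_ν S_{λ/ν}(x) s_{ν'/μ'}(y) = ∑_ν S_{ν/μ}(x) s_{λ'/ν'}(y), where both sums are over partitions ν with μ ⊆ ν ⊆ λ. -/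
/-- `q_r(x)` for `r : ℤ` (zero for negative `r`): the `r`-th coefficient of `Q`. -/
noncomputable def qInt {R : Type*} [CommRing R] (Q : PowerSeries R) (r : ℤ) : R :=
  if 0 ≤ r then PowerSeries.coeff r.toNat Q else 0

/-- `e_r(y)` for `r : ℤ` (zero for negative `r`). -/
def eInt {R : Type*} [CommRing R] {k : ℕ} (y : Fin k → R) (r : ℤ) : R :=
  if 0 ≤ r then esymmVal y r.toNat else 0

/-- `ϑ_r(x;y) = ∑_i q_{r-i}(x) e_i(y)` for `r : ℤ` (zero for negative `r`). -/
noncomputable def thInt {R : Type*} [CommRing R] {k : ℕ}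
    (Q : PowerSeries R) (y : Fin k → R) (r : ℤ) : R :=
  if 0 ≤ r then
    ∑ i ∈ Finset.range (r.toNat + 1), PowerSeries.coeff (r.toNat - i) Q * esymmVal y i
  else 0

/-- The skew Jacobi–Trudi determinant `det(c_{λ_i − μ_j + j − i})_{1≤i,j≤L}`. -/
def jtDet {R : Type*} [CommRing R] {L : ℕ} (c : ℤ → R) (lam mu : Fin L → ℕ) : R :=
  Matrix.det (Matrix.of fun i j : Fin L =>
    c ((lam i : ℤ) - (mu j : ℤ) + (j : ℕ) - (i : ℕ)))

/-!
Write `ϑ = q ⋆ e` for the convolution of two sequences indexed by `ℤ` and vanishing at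
negative indices. Putting `αᵢ = λᵢ - i` and `βⱼ = μⱼ - j`, the Jacobi–Trudi matrix
`(ϑ_{αᵢ - βⱼ})` factors as `(q_{αᵢ - t})_{i,t} · (e_{t - βⱼ})_{t,j}`, where `t` runs over a
window of integers wide enough to contain every `αᵢ` and `βⱼ`. By Cauchy–Binet its determinant
is a sum over strictly decreasing tuples `t_j`; writing `t_j = νⱼ - j`, the two minors are
`S_{λ/ν}(x)` and `s_{ν'/μ'}(y)`, and one of them vanishes unless `ν` is a partition with
`μ ⊆ ν ⊆ λ`. Since `q ⋆ e = e ⋆ q`, the second expansion is the first one with `q` and `e`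
exchanged.
-/

open Finset Equiv

theorem Fin.val_add_le_val_add_of_strictMono {L M : ℕ} {g : Fin L → Fin M} (hg : StrictMono g)
    {i j : Fin L} (hij : i ≤ j) : (g i : ℕ) + j ≤ g j + i := by
  have := card_le_card_of_injOn (s := Icc i j) g (fun k hk => mem_Icc.2
    ⟨hg.monotone (mem_Icc.1 hk).1, hg.monotone (mem_Icc.1 hk).2⟩) hg.injective.injOn
  rw [Fin.card_Icc, Fin.card_Icc] at this
  have : g i ≤ g j := hg.monotone hij
  omega

namespace Matrix

variable {R : Type*} [CommRing R]

theorem det_mul_eq_sum_prod_mul_det {m ι : Type*} [Fintype m] [DecidableEq m] [Fintype ι]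
    [DecidableEq ι] (A : Matrix m ι R) (B : Matrix ι m R) :
    (A * B).det = ∑ p : m → ι, (∏ i, B (p i) i) * (A.submatrix id p).det := by
  simp only [det_apply, mul_apply, prod_univ_sum, Fintype.piFinset_univ, smul_sum, mul_sum]
  rw [sum_comm]
  refine sum_congr rfl fun p _ => sum_congr rfl fun σ _ => ?_
  rw [prod_mul_distrib, mul_smul_comm, mul_comm]
  rfl

theorem det_eq_zero_of_lowerLeft_eq_zero {L : ℕ} (M : Matrix (Fin L) (Fin L) R) (i₀ : Fin L)
    (h : ∀ i j, i₀ ≤ i → j ≤ i₀ → M i j = 0) : M.det = 0 := by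
  rw [det_apply]
  refine sum_eq_zero fun σ _ => ?_
  -- pigeonhole: `σ` cannot map all of `Iic i₀` into the smaller set `Iio i₀`
  obtain ⟨j, hj, hσj⟩ : ∃ j ≤ i₀, i₀ ≤ σ j := by
    by_contra! hcon
    have := card_le_card_of_injOn σ (fun j hj => mem_Iio.2 (hcon j (mem_Iic.1 hj)))
      σ.injective.injOn
    rw [Fin.card_Iic, Fin.card_Iio] at this
    omega
  rw [prod_eq_zero (f := fun i => M (σ i) i) (mem_univ j) (h _ _ hσj hj), smul_zero]

open scoped Classical in
theorem det_mul_eq_sum_strictMono {L : ℕ} {ι : Type*} [Fintype ι] [LinearOrder ι]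
    (A : Matrix (Fin L) ι R) (B : Matrix ι (Fin L) R) :
    (A * B).det = ∑ g ∈ univ.filter (fun g : Fin L → ι => StrictMono g),
      (A.submatrix id g).det * (B.submatrix g id).det := by
  rw [det_mul_eq_sum_prod_mul_det]
  calc ∑ p : Fin L → ι, (∏ i, B (p i) i) * (A.submatrix id p).det
      = ∑ q ∈ univ.filter (fun g : Fin L → ι => StrictMono g) ×ˢ (univ : Finset (Perm (Fin L))),
          (∏ i, B (q.1 (q.2 i)) i) * (A.submatrix id (q.1 ∘ q.2)).det := by
        refine (sum_of_injOn (fun q : (Fin L → ι) × Perm (Fin L) => q.1 ∘ q.2) ?_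
          (fun _ _ => mem_coe.2 (mem_univ _)) ?_ fun _ _ => rfl).symm
        · rintro ⟨g, σ⟩ hq ⟨g', σ'⟩ hq' h
          simp only [coe_product, coe_filter, mem_univ, true_and, Set.mem_prod, Set.mem_ofPred_eq,
            coe_univ, Set.mem_univ, and_true] at hq hq' h
          obtain rfl : g = g' := (hq.range_inj hq').1 <| by
            rw [← EquivLike.range_comp g σ, ← EquivLike.range_comp g' σ', h]
          obtain rfl : σ = σ' := Equiv.ext fun i => hq.injective (congrFun h i)
          rfl
        · intro p _ hp
          by_cases hinj : p.Injective
          · -- `Tuple.sort` factors an injective `p` as a strictly monotone map after a permutation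
            refine absurd ⟨(p ∘ Tuple.sort p, (Tuple.sort p)⁻¹), ?_, ?_⟩ hp
            · simpa using (Tuple.monotone_sort p).strictMono_of_injective
                (hinj.comp (Tuple.sort p).injective)
            · ext i; simp
          · obtain ⟨a, b, hab, hne⟩ := Function.not_injective_iff.mp hinj
            rw [det_zero_of_column_eq hne fun k => by simp [hab], mul_zero]
    _ = ∑ g ∈ univ.filter (fun g : Fin L → ι => StrictMono g),
          (A.submatrix id g).det * (B.submatrix g id).det := by
        rw [sum_product]
        refine sum_congr rfl fun g _ => ?_
        simp only [Function.comp_def]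
        rw [det_apply (B.submatrix g id), mul_sum]
        refine sum_congr rfl fun σ _ => ?_
        rw [show A.submatrix id (fun i => g (σ i)) = (A.submatrix id g).submatrix id σ from rfl,
          det_permute', Units.smul_def, zsmul_eq_mul]
        simp only [submatrix_apply, id]
        ring

end Matrix

section JacobiTrudi

variable {R : Type*}

def jtMatrix {m n : Type*} (c : ℤ → R) (α : m → ℤ) (β : n → ℤ) : Matrix m n R :=
  Matrix.of fun i j => c (α i - β j)

variable [CommRing R]

theorem jtDet_eq_det_jtMatrix {L : ℕ} (c : ℤ → R) (lam mu : Fin L → ℕ) :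
    jtDet c lam mu = (jtMatrix c (fun i => (lam i : ℤ) - i) (fun j => (mu j : ℤ) - j)).det := by
  unfold jtDet jtMatrix
  congr 2
  ext i j
  ring_nf

theorem antitone_sub_index {L : ℕ} {lam : Fin L → ℕ} (hlam : Antitone lam) :
    Antitone fun i : Fin L => (lam i : ℤ) - i := by
  intro i j hij
  have h₁ := hlam hij
  have h₂ : (i : ℕ) ≤ j := hij
  dsimp only
  omega

theorem det_jtMatrix_eq_zero {L : ℕ} {c : ℤ → R} (hc : ∀ r < 0, c r = 0) {α β : Fin L → ℤ}
    (hα : Antitone α) (hβ : Antitone β) {i₀ : Fin L} (h : α i₀ < β i₀) :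
    (jtMatrix c α β).det = 0 :=
  Matrix.det_eq_zero_of_lowerLeft_eq_zero _ i₀ fun i j hi hj =>
    hc _ (by have := hα hi; have := hβ hj; omega)

def intConv (c d : ℤ → R) (r : ℤ) : R :=
  ∑ i ∈ range (r.toNat + 1), c (r - i) * d i

variable {c d : ℤ → R}

theorem intConv_sub_eq_sum_Icc (hc : ∀ r < 0, c r = 0) (a b : ℤ) :
    intConv c d (a - b) = ∑ u ∈ Icc b a, c (a - u) * d (u - b) := by
  refine (sum_of_injOn (fun u => (u - b).toNat) ?_ ?_ ?_ ?_).symm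
  · intro u hu v hv h
    simp only [coe_Icc, Set.mem_Icc] at hu hv h
    omega
  · intro u hu
    simp only [coe_Icc, Set.mem_Icc, coe_range, Set.mem_Iio] at hu ⊢
    omega
  · intro i _ hi
    have : a - b < i := by
      by_contra! h
      exact hi ⟨b + i, by simp only [coe_Icc, Set.mem_Icc]; omega, by simp⟩
    rw [hc _ (by omega), zero_mul]
  · intro u hu
    simp only [mem_Icc] at hu
    rw [Int.toNat_of_nonneg (by omega)]
    ring_nf

theorem intConv_comm (hc : ∀ r < 0, c r = 0) (hd : ∀ r < 0, d r = 0) :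
    intConv c d = intConv d c := by
  ext r
  simpa using (intConv_sub_eq_sum_Icc hc r 0).trans <|
    (sum_nbij' (fun u => r - u) (fun u => r - u) (by simp; omega) (by simp; omega)
      (by simp) (by simp) fun u _ => by ring_nf).trans
    (intConv_sub_eq_sum_Icc hd r 0).symm

theorem jtMatrix_intConv_eq_mul (hc : ∀ r < 0, c r = 0) (hd : ∀ r < 0, d r = 0)
    {m n ι : Type*} [Fintype ι] {T : ι → ℤ} (hT : T.Injective) (α : m → ℤ) (β : n → ℤ)
    (hcover : ∀ i j u, β j ≤ u → u ≤ α i → u ∈ Set.range T) :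
    jtMatrix (intConv c d) α β = jtMatrix c α T * jtMatrix d T β := by
  ext i j
  simp only [jtMatrix, Matrix.mul_apply, Matrix.of_apply]
  rw [intConv_sub_eq_sum_Icc hc]
  refine (sum_bij_ne_zero (fun t _ _ => T t) ?_ (fun _ _ _ _ _ _ h => hT h) ?_
    fun _ _ _ => rfl).symm
  · intro t _ h
    rw [mem_Icc]
    constructor <;> by_contra! hlt
    · exact h (by rw [hd _ (by omega), mul_zero])
    · exact h (by rw [hc _ (by omega), zero_mul])
  · intro u hu hne
    rw [mem_Icc] at hu
    obtain ⟨t, rfl⟩ := hcover i j u hu.1 hu.2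
    exact ⟨t, mem_univ _, hne, rfl⟩

open scoped Classical in
theorem jtDet_intConv_eq_sum_strictMono (hc : ∀ r < 0, c r = 0) (hd : ∀ r < 0, d r = 0)
    {L N : ℕ} (lam mu : Fin L → ℕ) (hN : ∀ i, lam i ≤ N) :
    jtDet (intConv c d) lam mu
      = ∑ g ∈ univ.filter (fun g : Fin L → Fin (N + L) => StrictMono g),
          (jtMatrix c (fun i => (lam i : ℤ) - i) (fun j => N - g j)).det *
            (jtMatrix d (fun j => N - g j) (fun j => (mu j : ℤ) - j)).det := by
  have hT : (fun t : Fin (N + L) => (N : ℤ) - t).Injective := fun s t h => by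
    ext
    simpa using h
  -- the values `N - t`, `t < N + L`, cover every `[μⱼ - j, λᵢ - i]`
  rw [jtDet_eq_det_jtMatrix, jtMatrix_intConv_eq_mul hc hd hT _ _ fun i j u hj hi =>
    have := hN i; ⟨⟨(N - u).toNat, by omega⟩, by dsimp only; omega⟩,
    Matrix.det_mul_eq_sum_strictMono]
  rfl

theorem bounds_of_det_mul_det_ne_zero (hc : ∀ r < 0, c r = 0) (hd : ∀ r < 0, d r = 0)
    {L N : ℕ} {lam mu : Fin L → ℕ} (hlam : Antitone lam) (hmu : Antitone mu)
    {g : Fin L → Fin (N + L)} (hg : StrictMono g)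
    (hne : (jtMatrix c (fun i => (lam i : ℤ) - i) (fun j => N - g j)).det *
      (jtMatrix d (fun j => N - g j) (fun j => (mu j : ℤ) - j)).det ≠ 0) (j : Fin L) :
    (mu j : ℤ) - j ≤ N - g j ∧ (N : ℤ) - g j ≤ lam j - j := by
  have hTg : Antitone fun j => (N : ℤ) - g j := fun i j hij => by
    have : g i ≤ g j := hg.monotone hij
    dsimp only
    omega
  constructor <;> by_contra! h
  · exact hne (by rw [det_jtMatrix_eq_zero hd hTg (antitone_sub_index hmu) h, mul_zero])
  · exact hne (by rw [det_jtMatrix_eq_zero hc (antitone_sub_index hlam) hTg h, zero_mul])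

theorem exists_partition_of_det_mul_det_ne_zero (hc : ∀ r < 0, c r = 0)
    (hd : ∀ r < 0, d r = 0) {L N : ℕ} {lam mu : Fin L → ℕ} (hlam : Antitone lam)
    (hmu : Antitone mu) (hN : ∀ i, lam i ≤ N) {g : Fin L → Fin (N + L)} (hg : StrictMono g)
    (hne : (jtMatrix c (fun i => (lam i : ℤ) - i) (fun j => N - g j)).det *
      (jtMatrix d (fun j => N - g j) (fun j => (mu j : ℤ) - j)).det ≠ 0) :
    ∃ ν ∈ (Icc mu lam).filter (fun ν => ∀ i j : Fin L, i ≤ j → ν j ≤ ν i),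
      (fun j => (⟨N + j - ν j, by omega⟩ : Fin (N + L))) = g := by
  have hbd := bounds_of_det_mul_det_ne_zero hc hd hlam hmu hg hne
  refine ⟨fun j => (N - g j + j : ℤ).toNat, ?_, funext fun j => Fin.ext ?_⟩
  · simp only [mem_filter, mem_Icc]
    refine ⟨⟨fun j => ?_, fun j => ?_⟩, fun i j hij => ?_⟩
    · have := hbd j
      dsimp only
      omega
    · have := hbd j
      dsimp only
      omega
    · have := Fin.val_add_le_val_add_of_strictMono hg hij
      have := hbd j
      have : (i : ℕ) ≤ j := hij
      omega
  · have := hbd j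
    have := hN j
    dsimp only
    omega

theorem jtDet_intConv (hc : ∀ r < 0, c r = 0) (hd : ∀ r < 0, d r = 0) {L : ℕ}
    (lam mu : Fin L → ℕ) (hlam : Antitone lam) (hmu : Antitone mu) :
    jtDet (intConv c d) lam mu
      = ∑ ν ∈ (Icc mu lam).filter (fun ν => ∀ i j : Fin L, i ≤ j → ν j ≤ ν i),
          jtDet c lam ν * jtDet d ν mu := by
  obtain ⟨N, hN⟩ : ∃ N, ∀ i, lam i ≤ N :=
    ⟨∑ i, lam i, fun i => single_le_sum (fun _ _ => Nat.zero_le _) (mem_univ i)⟩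
  rw [jtDet_intConv_eq_sum_strictMono hc hd lam mu hN]
  -- `ν ↦ g` with `N - g j = νⱼ - j`
  refine (sum_of_injOn (fun (ν : Fin L → ℕ) j => (⟨N + j - ν j, by omega⟩ : Fin (N + L)))
    ?_ ?_ ?_ ?_).symm
  · intro ν hν ν' hν' h
    simp only [coe_filter, mem_Icc, Set.mem_ofPred_eq] at hν hν'
    funext j
    have : N + (j : ℕ) - ν j = N + j - ν' j := congrArg Fin.val (congrFun h j)
    have : ν j ≤ lam j := hν.1.2 j
    have : ν' j ≤ lam j := hν'.1.2 j
    have := hN j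
    omega
  · intro ν hν
    simp only [coe_filter, mem_Icc, Set.mem_ofPred_eq, mem_univ, true_and] at hν ⊢
    intro i j hij
    have := hν.2 i j hij.le
    have : ν i ≤ lam i := hν.1.2 i
    have := hN i
    have : (i : ℕ) < j := hij
    simp only [Fin.mk_lt_mk]
    omega
  · intro g hg hgν
    by_contra hne
    obtain ⟨ν, hν, rfl⟩ := exists_partition_of_det_mul_det_ne_zero hc hd hlam hmu hN
      (by simpa using hg) hne
    exact hgν ⟨ν, hν, rfl⟩
  · intro ν hν
    simp only [mem_filter, mem_Icc] at hν
    rw [jtDet_eq_det_jtMatrix, jtDet_eq_det_jtMatrix]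
    congr 3 <;> funext j
    all_goals
      have : ν j ≤ lam j := hν.1.2 j
      have := hN j
      dsimp only
      omega

theorem qInt_of_neg (Q : PowerSeries R) {r : ℤ} (hr : r < 0) : qInt Q r = 0 :=
  if_neg (by omega)

theorem eInt_of_neg {k : ℕ} (y : Fin k → R) {r : ℤ} (hr : r < 0) : eInt y r = 0 :=
  if_neg (by omega)

theorem thInt_eq_intConv {k : ℕ} (Q : PowerSeries R) (y : Fin k → R) :
    thInt Q y = intConv (qInt Q) (eInt y) := by
  ext r
  unfold thInt intConv
  split_ifs with hr
  · refine sum_congr rfl fun i hi => ?_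
    rw [mem_range] at hi
    simp only [qInt, eInt, if_pos (by omega : 0 ≤ r - i), Int.natCast_nonneg, if_true,
      Int.toNat_natCast]
    rw [show (r - i).toNat = r.toNat - i by omega]
  · rw [Int.toNat_of_nonpos (by omega), sum_range_one, qInt_of_neg Q (by omega), zero_mul]

end JacobiTrudi

theorem stmt_12_general {R : Type*} [CommRing R] (k L : ℕ) (y : Fin k → R)
    (Q : PowerSeries R)
    (lam mu : Fin L → ℕ)
    (hlam : ∀ i j : Fin L, i ≤ j → lam j ≤ lam i)
    (hmu : ∀ i j : Fin L, i ≤ j → mu j ≤ mu i) :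
    (jtDet (thInt Q y) lam mu
        = ∑ ν ∈ (Finset.Icc mu lam).filter (fun ν => ∀ i j : Fin L, i ≤ j → ν j ≤ ν i),
            jtDet (qInt Q) lam ν * jtDet (eInt y) ν mu) ∧
    (jtDet (thInt Q y) lam mu
        = ∑ ν ∈ (Finset.Icc mu lam).filter (fun ν => ∀ i j : Fin L, i ≤ j → ν j ≤ ν i),
            jtDet (qInt Q) ν mu * jtDet (eInt y) lam ν) := by
  have hq : ∀ r < 0, qInt Q r = 0 := fun _ => qInt_of_neg Q
  have he : ∀ r < 0, eInt y r = 0 := fun _ => eInt_of_neg y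
  rw [thInt_eq_intConv]
  refine ⟨jtDet_intConv hq he lam mu hlam hmu, ?_⟩
  rw [intConv_comm hq he, jtDet_intConv he hq lam mu hlam hmu]
  exact sum_congr rfl fun _ _ => mul_comm _ _

/-- for partitions `μ ⊆ λ`,
`S^{(k)}_{λ/μ}(x;y) = ∑_ν S_{λ/ν}(x) s_{ν'/μ'}(y) = ∑_ν S_{ν/μ}(x) s_{λ'/ν'}(y)`,
with both sums over partitions `ν` with `μ ⊆ ν ⊆ λ`. -/
theorem stmt_12 {R : Type*} [CommRing R] (n k L : ℕ) (x : Fin n → R) (y : Fin k → R)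
    (Q : PowerSeries R)
    (hQ : Q * ∏ i : Fin n, (1 - PowerSeries.C (x i) * PowerSeries.X) =
          ∏ i : Fin n, (1 + PowerSeries.C (x i) * PowerSeries.X))
    (lam mu : Fin L → ℕ)
    (hlam : ∀ i j : Fin L, i ≤ j → lam j ≤ lam i)
    (hmu : ∀ i j : Fin L, i ≤ j → mu j ≤ mu i)
    (hsub : mu ≤ lam) :
    (jtDet (thInt Q y) lam mu
        = ∑ ν ∈ (Finset.Icc mu lam).filter (fun ν => ∀ i j : Fin L, i ≤ j → ν j ≤ ν i),
            jtDet (qInt Q) lam ν * jtDet (eInt y) ν mu) ∧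
    (jtDet (thInt Q y) lam mu
        = ∑ ν ∈ (Finset.Icc mu lam).filter (fun ν => ∀ i j : Fin L, i ≤ j → ν j ≤ ν i),
            jtDet (qInt Q) ν mu * jtDet (eInt y) lam ν) :=
  stmt_12_general k L y Q lam mu hlam hmu
end
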